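/- Randomized proximal coordinate descent on h = f + λΩ with separable convex Ω, σ-strongly convex smooth f, and steplength 1/L_max satisfies E[h(x^k)] - h* ≤ (1 - σ/(n·L_max))^k (h(x⁰) - h*). -/

import Mathlib

/-!
A proximal coordinate step minimizes the coordinate quadratic model of `h`, which by the
one-dimensional descent lemma (from the coordinate Lipschitz bound) majorizes `h` along that
coordinate. Comparing with the trial point `x i + α (x* i - x i)`, `α = σ / Lmax ≤ 1`, using
convexity of `Ω_i` and `Lmax α² = σ α`, and summing over coordinates, strong convexity of `f`
gives `∑ i, (h (T_i x) - h*) ≤ (n - α) (h x - h*)`: one uniformly random step contracts the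
expected gap by `1 - σ / (n Lmax)`. Splitting each of the `n ^ k` index paths into its first
`k - 1` indices and its last one iterates the contraction.
-/

open Finset

theorem le_add_mul_deriv_add_sq_of_abs_deriv_sub_le {φ φ' : ℝ → ℝ} {L : ℝ}
    (hφ : ∀ s, HasDerivAt φ (φ' s) s) (hL : ∀ s, |φ' s - φ' 0| ≤ L * |s|) (t : ℝ) :
    φ t ≤ φ 0 + t * φ' 0 + L / 2 * t ^ 2 := by
  -- the gap to the quadratic model along `s ↦ s * t` is antitone on `[0, 1]`, for either sign of `t`
  set ψ : ℝ → ℝ := fun s => φ (s * t) - s * t * φ' 0 - L / 2 * t ^ 2 * s ^ 2 with hψ_def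
  have hψ : ∀ s, HasDerivAt ψ (t * (φ' (s * t) - φ' 0) - L * t ^ 2 * s) s := by
    intro s
    have hlin : HasDerivAt (fun s : ℝ => s * t) t s := by
      simpa using (hasDerivAt_id s).mul_const t
    exact ((((hφ (s * t)).comp s hlin).sub (hlin.mul_const (φ' 0))).sub
      ((hasDerivAt_pow 2 s).const_mul (L / 2 * t ^ 2))).congr_deriv (by ring)
  have hanti : AntitoneOn ψ (Set.Icc 0 1) := by
    refine antitoneOn_of_deriv_nonpos (convex_Icc 0 1)
      (fun s _ => (hψ s).continuousAt.continuousWithinAt)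
      (fun s _ => (hψ s).differentiableAt.differentiableWithinAt) fun s hs => ?_
    rw [interior_Icc] at hs
    rw [(hψ s).deriv, sub_nonpos]
    calc t * (φ' (s * t) - φ' 0) ≤ |t| * |φ' (s * t) - φ' 0| := by
          rw [← abs_mul]; exact le_abs_self _
      _ ≤ |t| * (L * |s * t|) := mul_le_mul_of_nonneg_left (hL _) (abs_nonneg t)
      _ = L * t ^ 2 * s := by
          rw [abs_mul, abs_of_pos hs.1, ← sq_abs t]; ring
  have := hanti (Set.left_mem_Icc.2 zero_le_one) (Set.right_mem_Icc.2 zero_le_one) zero_le_one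
  simp only [hψ_def, zero_mul, one_mul] at this
  linarith

section Coordinate

variable {ι : Type*} [DecidableEq ι]

noncomputable def coordUpdate (x : EuclideanSpace ℝ ι) (i : ι) (a : ℝ) : EuclideanSpace ℝ ι :=
  x + (a - x i) • EuclideanSpace.single i 1

theorem coordUpdate_apply (x : EuclideanSpace ℝ ι) (i j : ι) (a : ℝ) :
    coordUpdate x i a j = if j = i then a else x j := by
  by_cases hji : j = i
  · subst hji; simp [coordUpdate]
  · simp [coordUpdate, hji]

theorem sum_comp_coordUpdate [Fintype ι] (F : ι → ℝ → ℝ) (x : EuclideanSpace ℝ ι) (i : ι)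
    (a : ℝ) :
    ∑ j, F j (coordUpdate x i a j) = ∑ j, F j (x j) + (F i a - F i (x i)) := by
  have hdiff : ∑ j, (F j (coordUpdate x i a j) - F j (x j)) = F i a - F i (x i) := by
    rw [Fintype.sum_eq_single i fun j hji => by simp [coordUpdate_apply, hji]]
    simp [coordUpdate_apply]
  rw [sum_sub_distrib] at hdiff
  linarith

theorem hasDerivAt_comp_add_smul_single [Fintype ι] {f : EuclideanSpace ℝ ι → ℝ}
    {g : EuclideanSpace ℝ ι → EuclideanSpace ℝ ι} (hdiff : ∀ x, HasGradientAt f (g x) x)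
    (x : EuclideanSpace ℝ ι) (i : ι) (s : ℝ) :
    HasDerivAt (fun s : ℝ => f (x + s • EuclideanSpace.single i 1))
      (g (x + s • EuclideanSpace.single i 1) i) s := by
  have hline : HasDerivAt (fun s : ℝ => x + s • EuclideanSpace.single i 1)
      (EuclideanSpace.single i 1) s := by
    simpa using ((hasDerivAt_id s).smul_const (EuclideanSpace.single i (1 : ℝ))).const_add x
  exact ((hdiff _).hasFDerivAt.comp_hasDerivAt s hline).congr_deriv
    (by simp [EuclideanSpace.inner_single_right])

variable [Fintype ι] {f : EuclideanSpace ℝ ι → ℝ} {g : EuclideanSpace ℝ ι → EuclideanSpace ℝ ι}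
  {σ L : ℝ}

theorem le_add_mul_grad_add_sq_of_coord_lipschitz (hdiff : ∀ x, HasGradientAt f (g x) x)
    (x : EuclideanSpace ℝ ι) (i : ι)
    (hLip : ∀ t : ℝ, |g (x + t • EuclideanSpace.single i 1) i - g x i| ≤ L * |t|) (t : ℝ) :
    f (x + t • EuclideanSpace.single i 1) ≤ f x + t * g x i + L / 2 * t ^ 2 := by
  simpa using le_add_mul_deriv_add_sq_of_abs_deriv_sub_le
    (hasDerivAt_comp_add_smul_single hdiff x i) (fun s => by simpa using hLip s) t

theorem le_of_strongConvex_of_coord_lipschitz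
    (hsc : ∀ x y, f x + (inner ℝ (g x) (y - x) : ℝ) + σ / 2 * ‖y - x‖ ^ 2 ≤ f y) (i : ι)
    (hLip : |g (EuclideanSpace.single i 1) i - g 0 i| ≤ L) : σ ≤ L := by
  have h₁ := hsc 0 (EuclideanSpace.single i 1)
  have h₂ := hsc (EuclideanSpace.single i 1) 0
  simp only [sub_zero, zero_sub, norm_neg, PiLp.norm_single, norm_one, one_pow,
    inner_neg_right, EuclideanSpace.inner_single_right, conj_trivial, one_mul] at h₁ h₂
  linarith [le_abs_self (g (EuclideanSpace.single i 1) i - g 0 i)]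

variable {lam : ℝ} {Om : ι → ℝ → ℝ} {h : EuclideanSpace ℝ ι → ℝ}
  {st : ι → EuclideanSpace ℝ ι → ℝ}

theorem composite_coordUpdate_prox_le (hdiff : ∀ x, HasGradientAt f (g x) x)
    (hLip : ∀ (x : EuclideanSpace ℝ ι) (i : ι) (t : ℝ),
      |g (x + t • EuclideanSpace.single i 1) i - g x i| ≤ L * |t|)
    (hh : ∀ x, h x = f x + lam * ∑ i, Om i (x i))
    (hst : ∀ i x (χ : ℝ),
      (st i x - x i) * g x i + L / 2 * (st i x - x i) ^ 2 + lam * Om i (st i x)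
        ≤ (χ - x i) * g x i + L / 2 * (χ - x i) ^ 2 + lam * Om i χ)
    (x : EuclideanSpace ℝ ι) (i : ι) (χ : ℝ) :
    h (coordUpdate x i (st i x))
      ≤ h x + (χ - x i) * g x i + L / 2 * (χ - x i) ^ 2 + lam * (Om i χ - Om i (x i)) := by
  have hf : f (coordUpdate x i (st i x))
      ≤ f x + (st i x - x i) * g x i + L / 2 * (st i x - x i) ^ 2 :=
    le_add_mul_grad_add_sq_of_coord_lipschitz hdiff x i (hLip x i) _
  rw [hh, hh, sum_comp_coordUpdate]
  linarith [hst i x χ]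

theorem sum_composite_prox_step_sub_le (hσ : 0 ≤ σ) (hL : 0 < L) (hσL : σ ≤ L) (hlam : 0 ≤ lam)
    (hdiff : ∀ x, HasGradientAt f (g x) x)
    (hsc : ∀ x y, f x + (inner ℝ (g x) (y - x) : ℝ) + σ / 2 * ‖y - x‖ ^ 2 ≤ f y)
    (hLip : ∀ (x : EuclideanSpace ℝ ι) (i : ι) (t : ℝ),
      |g (x + t • EuclideanSpace.single i 1) i - g x i| ≤ L * |t|)
    (hOm : ∀ i, ConvexOn ℝ Set.univ (Om i))
    (hh : ∀ x, h x = f x + lam * ∑ i, Om i (x i))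
    (hst : ∀ i x (χ : ℝ),
      (st i x - x i) * g x i + L / 2 * (st i x - x i) ^ 2 + lam * Om i (st i x)
        ≤ (χ - x i) * g x i + L / 2 * (χ - x i) ^ 2 + lam * Om i χ)
    (x y : EuclideanSpace ℝ ι) :
    ∑ i, (h (coordUpdate x i (st i x)) - h y) ≤ (Fintype.card ι - σ / L) * (h x - h y) := by
  set α := σ / L
  have hα₀ : 0 ≤ α := div_nonneg hσ hL.le
  have hα₁ : α ≤ 1 := (div_le_one hL).2 hσL
  have hLα : L * α = σ := mul_div_cancel₀ σ hL.ne'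
  have hcoord : ∀ i, h (coordUpdate x i (st i x)) ≤ h x + α * ((y i - x i) * g x i
      + σ / 2 * (y i - x i) ^ 2 + lam * (Om i (y i) - Om i (x i))) := by
    intro i
    have hconv : Om i (x i + α * (y i - x i)) ≤ (1 - α) * Om i (x i) + α * Om i (y i) := by
      have := (hOm i).2 (Set.mem_univ (x i)) (Set.mem_univ (y i)) (sub_nonneg.2 hα₁) hα₀
        (by ring)
      rwa [smul_eq_mul, smul_eq_mul,
        show (1 - α) * x i + α * y i = x i + α * (y i - x i) by ring] at this
    linear_combination
      composite_coordUpdate_prox_le hdiff hLip hh hst x i (x i + α * (y i - x i))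
        + lam * hconv + (α * (y i - x i) ^ 2 / 2) * hLα
  have hsum : ∑ i, ((y i - x i) * g x i + σ / 2 * (y i - x i) ^ 2
      + lam * (Om i (y i) - Om i (x i)))
      = (inner ℝ (g x) (y - x) : ℝ) + σ / 2 * ‖y - x‖ ^ 2
        + lam * (∑ i, Om i (y i) - ∑ i, Om i (x i)) := by
    simp [sum_add_distrib, ← mul_sum, sum_sub_distrib, EuclideanSpace.real_norm_sq_eq,
      PiLp.inner_apply]
  calc ∑ i, (h (coordUpdate x i (st i x)) - h y)
      ≤ ∑ i, (h x - h y + α * ((y i - x i) * g x i + σ / 2 * (y i - x i) ^ 2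
          + lam * (Om i (y i) - Om i (x i)))) :=
        sum_le_sum fun i _ => by linarith [hcoord i]
    _ = Fintype.card ι * (h x - h y) + α * ((inner ℝ (g x) (y - x) : ℝ)
          + σ / 2 * ‖y - x‖ ^ 2 + lam * (∑ i, Om i (y i) - ∑ i, Om i (x i))) := by
        rw [sum_add_distrib, ← mul_sum, hsum, sum_const, card_univ, nsmul_eq_mul]
    _ ≤ Fintype.card ι * (h x - h y) + α * (h y - h x) := by
        gcongr
        rw [hh, hh]
        linarith [hsc x y]
    _ = (Fintype.card ι - α) * (h x - h y) := by ring

end Coordinate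

section PathAverage

variable {ι E : Type*}

def padPath (d : ι) {k : ℕ} (ω : Fin k → ι) : ℕ → ι :=
  fun j => if hj : j < k then ω ⟨j, hj⟩ else d

theorem padPath_snoc_of_lt (d : ι) {m : ℕ} (τ : Fin m → ι) (i : ι) {j : ℕ} (hj : j < m) :
    padPath d (Fin.snoc τ i : Fin (m + 1) → ι) j = padPath d τ j := by
  simp only [padPath, hj, Nat.lt_succ_of_lt hj, dif_pos]
  exact Fin.snoc_castSucc (α := fun _ => ι) _ _ ⟨j, hj⟩

theorem padPath_snoc_self (d : ι) {m : ℕ} (τ : Fin m → ι) (i : ι) :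
    padPath d (Fin.snoc τ i : Fin (m + 1) → ι) m = i := by
  simp only [padPath, Nat.lt_succ_self, dif_pos]
  exact Fin.snoc_last (α := fun _ => ι) _ _

variable {T : ι → E → E} {X : (ℕ → ι) → ℕ → E} {x₀ : E}

theorem iterate_eq_of_eqOn_lt (hX0 : ∀ ω, X ω 0 = x₀)
    (hXs : ∀ ω k, X ω (k + 1) = T (ω k) (X ω k)) {m : ℕ} {ω ω' : ℕ → ι}
    (h : ∀ j < m, ω j = ω' j) : X ω m = X ω' m := by
  induction m with
  | zero => rw [hX0, hX0]
  | succ m ih =>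
    rw [hXs, hXs, ih fun j hj => h j (Nat.lt_succ_of_lt hj), h m (Nat.lt_succ_self m)]

theorem iterate_padPath_snoc (hX0 : ∀ ω, X ω 0 = x₀)
    (hXs : ∀ ω k, X ω (k + 1) = T (ω k) (X ω k)) (d : ι) {m : ℕ} (τ : Fin m → ι) (i : ι) :
    X (padPath d (Fin.snoc τ i : Fin (m + 1) → ι)) (m + 1) = T i (X (padPath d τ) m) := by
  rw [hXs, padPath_snoc_self,
    iterate_eq_of_eqOn_lt hX0 hXs fun j hj => padPath_snoc_of_lt d τ i hj]

theorem sum_iterate_padPath_le_pow [Fintype ι] {V : E → ℝ} {c : ℝ} (hc : 0 ≤ c)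
    (hT : ∀ x, ∑ i, V (T i x) ≤ c * V x) (hX0 : ∀ ω, X ω 0 = x₀)
    (hXs : ∀ ω k, X ω (k + 1) = T (ω k) (X ω k)) (d : ι) (k : ℕ) :
    ∑ ω : Fin k → ι, V (X (padPath d ω) k) ≤ c ^ k * V x₀ := by
  induction k with
  | zero => simp [hX0]
  | succ m ih =>
    calc ∑ ω : Fin (m + 1) → ι, V (X (padPath d ω) (m + 1))
        = ∑ τ : Fin m → ι, ∑ i, V (T i (X (padPath d τ) m)) := by
          rw [← (Fin.snocEquiv fun _ => ι).sum_comp, Fintype.sum_prod_type, sum_comm]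
          exact sum_congr rfl fun τ _ => sum_congr rfl fun i _ => by
            rw [← iterate_padPath_snoc hX0 hXs d τ i]; rfl
      _ ≤ ∑ τ : Fin m → ι, c * V (X (padPath d τ) m) := sum_le_sum fun τ _ => hT _
      _ ≤ c ^ (m + 1) * V x₀ := by
          rw [← mul_sum, pow_succ', mul_assoc]
          exact mul_le_mul_of_nonneg_left ih hc

end PathAverage

theorem randomized_proximal_cd_linear_rate_general (n : ℕ) (hn : 0 < n)
    (f : EuclideanSpace ℝ (Fin n) → ℝ)
    (g : EuclideanSpace ℝ (Fin n) → EuclideanSpace ℝ (Fin n))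
    (hdiff : ∀ x, HasGradientAt f (g x) x)
    (σ Lmax lam : ℝ) (hσ : 0 < σ) (hLmax : 0 < Lmax) (hlam : 0 < lam)
    (hsc : ∀ x y, f x + (inner ℝ (g x) (y - x) : ℝ) + σ / 2 * ‖y - x‖ ^ 2 ≤ f y)
    (hLip : ∀ (x : EuclideanSpace ℝ (Fin n)) (i : Fin n) (t : ℝ),
      |g (x + t • EuclideanSpace.single i 1) i - g x i| ≤ Lmax * |t|)
    (Om : Fin n → ℝ → ℝ) (hOm : ∀ i, ConvexOn ℝ Set.univ (Om i))
    (h : EuclideanSpace ℝ (Fin n) → ℝ)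
    (hh : ∀ x, h x = f x + lam * ∑ i, Om i (x i))
    (xstar : EuclideanSpace ℝ (Fin n))
    -- `st i x` is the minimizer of the scalar proximal subproblem along coordinate `i`:
    (st : Fin n → EuclideanSpace ℝ (Fin n) → ℝ)
    (hst : ∀ i x (χ : ℝ),
      (st i x - x i) * g x i + Lmax / 2 * (st i x - x i) ^ 2 + lam * Om i (st i x)
        ≤ (χ - x i) * g x i + Lmax / 2 * (χ - x i) ^ 2 + lam * Om i χ)
    (x0 : EuclideanSpace ℝ (Fin n))
    (X : (ℕ → Fin n) → ℕ → EuclideanSpace ℝ (Fin n))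
    (hX0 : ∀ ω, X ω 0 = x0)
    (hXs : ∀ ω k, X ω (k + 1) =
      X ω k + (st (ω k) (X ω k) - X ω k (ω k)) • EuclideanSpace.single (ω k) 1)
    (k : ℕ) :
    ((n : ℝ) ^ k)⁻¹ *
        (∑ ω : Fin k → Fin n,
          h (X (fun j => if hj : j < k then ω ⟨j, hj⟩ else ⟨0, hn⟩) k)) - h xstar
      ≤ (1 - σ / (n * Lmax)) ^ k * (h x0 - h xstar) := by
  have hσL : σ ≤ Lmax :=
    le_of_strongConvex_of_coord_lipschitz hsc ⟨0, hn⟩ (by simpa using hLip 0 ⟨0, hn⟩ 1)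
  have hn₀ : (0 : ℝ) < n := Nat.cast_pos.2 hn
  have hc : 0 ≤ (n : ℝ) - σ / Lmax := by
    linarith [(div_le_one hLmax).2 hσL, (Nat.one_le_cast (α := ℝ)).2 hn]
  have hpath := sum_iterate_padPath_le_pow (T := fun i x => coordUpdate x i (st i x))
    (V := fun x => h x - h xstar) hc (fun x => by
      simpa using sum_composite_prox_step_sub_le hσ.le hLmax hσL hlam.le hdiff hsc hLip hOm hh
        hst x xstar) hX0 hXs ⟨0, hn⟩ k
  simp only [sum_sub_distrib, sum_const, card_univ, Fintype.card_fun, Fintype.card_fin,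
    nsmul_eq_mul, Nat.cast_pow] at hpath
  calc ((n : ℝ) ^ k)⁻¹ * (∑ ω : Fin k → Fin n, h (X (padPath ⟨0, hn⟩ ω) k)) - h xstar
      = ((n : ℝ) ^ k)⁻¹ * (∑ ω : Fin k → Fin n, h (X (padPath ⟨0, hn⟩ ω) k)
          - (n : ℝ) ^ k * h xstar) := by field_simp
    _ ≤ ((n : ℝ) ^ k)⁻¹ * (((n : ℝ) - σ / Lmax) ^ k * (h x0 - h xstar)) := by gcongr
    _ = (1 - σ / (n * Lmax)) ^ k * (h x0 - h xstar) := by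
        rw [← mul_assoc, ← inv_pow, ← mul_pow]
        congr 2
        field_simp

/-- Linear rate of randomized proximal coordinate descent on `h = f + λΩ` with
separable convex `Ω` and σ-strongly convex smooth `f`:
`E[h(x^k)] - h* ≤ (1 - σ/(n Lmax))^k (h(x⁰) - h*)`. -/
theorem randomized_proximal_cd_linear_rate (n : ℕ) (hn : 0 < n)
    (f : EuclideanSpace ℝ (Fin n) → ℝ)
    (g : EuclideanSpace ℝ (Fin n) → EuclideanSpace ℝ (Fin n))
    (hdiff : ∀ x, HasGradientAt f (g x) x)
    (σ Lmax lam : ℝ) (hσ : 0 < σ) (hLmax : 0 < Lmax) (hlam : 0 < lam)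
    (hsc : ∀ x y, f x + (inner ℝ (g x) (y - x) : ℝ) + σ / 2 * ‖y - x‖ ^ 2 ≤ f y)
    (hLip : ∀ (x : EuclideanSpace ℝ (Fin n)) (i : Fin n) (t : ℝ),
      |g (x + t • EuclideanSpace.single i 1) i - g x i| ≤ Lmax * |t|)
    (Om : Fin n → ℝ → ℝ) (hOm : ∀ i, ConvexOn ℝ Set.univ (Om i))
    (h : EuclideanSpace ℝ (Fin n) → ℝ)
    (hh : ∀ x, h x = f x + lam * ∑ i, Om i (x i))
    (xstar : EuclideanSpace ℝ (Fin n))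
    (hmin : ∀ x, h xstar ≤ h x)
    (huniq : ∀ x, h x = h xstar → x = xstar)
    -- `st i x` is the minimizer of the scalar proximal subproblem along coordinate `i`:
    (st : Fin n → EuclideanSpace ℝ (Fin n) → ℝ)
    (hst : ∀ i x (χ : ℝ),
      (st i x - x i) * g x i + Lmax / 2 * (st i x - x i) ^ 2 + lam * Om i (st i x)
        ≤ (χ - x i) * g x i + Lmax / 2 * (χ - x i) ^ 2 + lam * Om i χ)
    (x0 : EuclideanSpace ℝ (Fin n))
    (X : (ℕ → Fin n) → ℕ → EuclideanSpace ℝ (Fin n))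
    (hX0 : ∀ ω, X ω 0 = x0)
    (hXs : ∀ ω k, X ω (k + 1) =
      X ω k + (st (ω k) (X ω k) - X ω k (ω k)) • EuclideanSpace.single (ω k) 1)
    (k : ℕ) :
    ((n : ℝ) ^ k)⁻¹ *
        (∑ ω : Fin k → Fin n,
          h (X (fun j => if hj : j < k then ω ⟨j, hj⟩ else ⟨0, hn⟩) k)) - h xstar
      ≤ (1 - σ / (n * Lmax)) ^ k * (h x0 - h xstar) :=
  randomized_proximal_cd_linear_rate_general n hn f g hdiff σ Lmax lam hσ hLmax hlam hsc hLip Om hOm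
    h hh xstar st hst x0 X hX0 hXs k
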